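/- arXiv:2501.12279 — 5 statements merged into one kernel-verified Lean document; each statement's English description precedes it below -/
import Mathlib

section
/- Let $k_B(\omega) = \sum_{j=1}^\infty k_j \chi_{[a_j,b_j]}(\omega)$ with $0=a_1<b_1\le a_2<b_2\le\cdots$, $(a_j)$ unbounded, and $(k_j)\subset\mathbb{R}_{>0}$ bounded. Fix $k>0$. Then there exists $M>0$ such that $e^{-\int_0^t k_B(\tau)\,d\tau} \le M e^{-kt}$ for all $t\ge 0$ if and only if there exists $\tilde M>0$ such that $k a_n - \sum_{j=1}^{n-1} k_j(b_j-a_j) \le \tilde M$ for all $n\in\mathbb{N}$. -/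
open MeasureTheory

private lemma indicator_intInt (c d r t : ℝ) (hc : 0 ≤ c) (hcd : c ≤ d) (ht : 0 ≤ t) :
    ∫ τ in (0:ℝ)..t, (Set.Icc c d).indicator (fun _ => r) τ = r * (min t d - min t c) := by
  rw [intervalIntegral.integral_of_le ht, setIntegral_indicator measurableSet_Icc]
  have hvol : volume (Set.Ioc 0 t ∩ Set.Icc c d) = ENNReal.ofReal (min t d - c) := by
    apply le_antisymm
    · calc volume (Set.Ioc 0 t ∩ Set.Icc c d) ≤ volume (Set.Icc c (min t d)) := by
            apply measure_mono
            rintro x ⟨⟨hx1, hx2⟩, hx3, hx4⟩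
            exact ⟨hx3, le_min hx2 hx4⟩
         _ = ENNReal.ofReal (min t d - c) := Real.volume_Icc
    · calc ENNReal.ofReal (min t d - c) = volume (Set.Ioo c (min t d)) := Real.volume_Ioo.symm
         _ ≤ volume (Set.Ioc 0 t ∩ Set.Icc c d) := by
            apply measure_mono
            rintro x ⟨hx1, hx2⟩
            exact ⟨⟨lt_of_le_of_lt hc hx1, hx2.le.trans (min_le_left _ _)⟩,
              hx1.le, hx2.le.trans (min_le_right _ _)⟩
  rw [setIntegral_const, measureReal_def, hvol, smul_eq_mul, ENNReal.toReal_ofReal']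
  rcases le_total t c with h | h
  · rw [min_eq_left h, min_eq_left (h.trans hcd), max_eq_right (by linarith)]
    ring
  · rw [min_eq_right h, max_eq_left (by simp [le_min_iff]; exact ⟨h, hcd⟩)]
    ring

/-- Characterization of exponential decay of `e^{-∫₀ᵗ k_B}` for a piecewise constant
damping coefficient `k_B = ∑ⱼ kⱼ χ_{[aⱼ,bⱼ]}` (starting point `ω = 0`):
decay with rate `k` holds iff `k aₙ - ∑_{j<n} kⱼ(bⱼ-aⱼ)` is bounded above. -/
theorem stmt_4 (a b kj : ℕ → ℝ) (k : ℝ) (hk : 0 < k)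
    (ha0 : a 0 = 0)
    (horder : ∀ j, a j < b j ∧ b j ≤ a (j + 1))
    (hunbdd : ∀ M : ℝ, ∃ j, M < a j)
    (hkpos : ∀ j, 0 < kj j)
    (hkbdd : ∃ C : ℝ, ∀ j, kj j ≤ C) :
    (∃ M > (0:ℝ), ∀ t : ℝ, 0 ≤ t →
        Real.exp (-∫ τ in (0:ℝ)..t,
            ∑' j : ℕ, Set.indicator (Set.Icc (a j) (b j)) (fun _ => kj j) τ) ≤
          M * Real.exp (-k * t)) ↔
    (∃ M' > (0:ℝ), ∀ n : ℕ,
        k * a n - ∑ j ∈ Finset.range n, kj j * (b j - a j) ≤ M') := by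
  have hab : ∀ j, a j < b j := fun j => (horder j).1
  have hba : ∀ j, b j ≤ a (j+1) := fun j => (horder j).2
  have hmono : StrictMono a := strictMono_nat_of_lt_succ fun n => (hab n).trans_le (hba n)
  have ha_nonneg : ∀ n, 0 ≤ a n := fun n => ha0 ▸ hmono.monotone (Nat.zero_le n)
  set f : ℝ → ℝ := fun τ => ∑' j : ℕ, Set.indicator (Set.Icc (a j) (b j)) (fun _ => kj j) τ
    with hf
  set S : ℕ → ℝ := fun n => ∑ j ∈ Finset.range n, kj j * (b j - a j) with hS
  have key : ∀ N : ℕ, ∀ t : ℝ, 0 ≤ t → t ≤ a N →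
      ∫ τ in (0:ℝ)..t, f τ
        = ∑ j ∈ Finset.range N, kj j * (min t (b j) - min t (a j)) := by
    intro N t ht htN
    have hint : ∀ j : ℕ, IntervalIntegrable
        ((Set.Icc (a j) (b j)).indicator (fun _ => kj j)) volume 0 t := by
      intro j
      rw [intervalIntegrable_iff_integrableOn_Ioc_of_le ht]
      exact ((integrableOn_const_iff (C := kj j)).mpr (Or.inr measure_Ioc_lt_top)).indicator measurableSet_Icc
    have hcongr : ∫ τ in (0:ℝ)..t, f τ
        = ∫ τ in (0:ℝ)..t, ∑ j ∈ Finset.range N,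
            (Set.Icc (a j) (b j)).indicator (fun _ => kj j) τ := by
      apply intervalIntegral.integral_congr_ae
      have hne : ∀ᵐ x : ℝ, x ≠ a N := by
        rw [ae_iff]
        simp only [ne_eq, not_not, Set.setOf_eq_eq_singleton]
        exact measure_singleton _
      filter_upwards [hne] with x hx hxI
      rw [Set.uIoc_of_le ht] at hxI
      have hxlt : x < a N := lt_of_le_of_ne (hxI.2.trans htN) hx
      apply tsum_eq_sum
      intro j hj
      have : N ≤ j := by simpa using hj
      apply Set.indicator_of_notMem
      intro hmem
      exact absurd (le_trans (hmono.monotone this) hmem.1) (not_le.mpr hxlt)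
    rw [hcongr, intervalIntegral.integral_finset_sum (fun j _ => hint j)]
    exact Finset.sum_congr rfl fun j _ =>
      indicator_intInt _ _ _ _ (ha_nonneg j) (hab j).le ht
  have keyF : ∀ n : ℕ, ∀ t : ℝ, a n ≤ t → t ≤ a (n+1) →
      ∫ τ in (0:ℝ)..t, f τ = S n + kj n * (min t (b n) - a n) := by
    intro n t h1 h2
    rw [key (n+1) t (le_trans (ha_nonneg n) h1) h2, Finset.sum_range_succ]
    congr 1
    · apply Finset.sum_congr rfl
      intro j hj
      have hj' : j < n := Finset.mem_range.mp hj
      have hbj : b j ≤ a n := (hba j).trans (hmono.monotone hj')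
      rw [min_eq_right (hbj.trans h1), min_eq_right (((hab j).le.trans hbj).trans h1)]
    · rw [min_eq_right h1]
  constructor
  · rintro ⟨M, hM, h⟩
    refine ⟨max (Real.log M) 1, lt_of_lt_of_le one_pos (le_max_right _ _), fun n => ?_⟩
    have hFa : ∫ τ in (0:ℝ)..(a n), f τ = S n := by
      rw [keyF n (a n) le_rfl (hmono.monotone (Nat.le_succ n)),
        min_eq_left (hab n).le]
      ring
    have h2 := h (a n) (ha_nonneg n)
    rw [hFa] at h2
    have h3 : Real.exp (k * a n - S n) ≤ M := by
      have e := mul_le_mul_of_nonneg_right h2 (Real.exp_pos (k * a n)).le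
      rw [← Real.exp_add, mul_assoc, ← Real.exp_add] at e
      rw [show -S n + k * a n = k * a n - S n by ring,
        show -k * a n + k * a n = 0 by ring, Real.exp_zero, mul_one] at e
      exact e
    exact le_trans ((Real.le_log_iff_exp_le hM).mpr h3) (le_max_left _ _)
  · rintro ⟨M', hM', h⟩
    refine ⟨Real.exp M', Real.exp_pos _, fun t ht => ?_⟩
    have hex : ∃ m, t < a m := hunbdd t
    have hn0 : t < a (Nat.find hex) := Nat.find_spec hex
    have hn0pos : Nat.find hex ≠ 0 := by
      intro h0
      rw [h0, ha0] at hn0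
      exact absurd ht (not_le.mpr hn0)
    obtain ⟨n, hn⟩ := Nat.exists_eq_succ_of_ne_zero hn0pos
    rw [hn] at hn0
    have hlow : a n ≤ t := not_lt.mp (by
      have := Nat.find_min hex (m := n) (by omega)
      exact this)
    rw [keyF n t hlow hn0.le, ← Real.exp_add]
    apply Real.exp_le_exp.mpr
    have h1 := h n
    have h2 := h (n+1)
    rw [Finset.sum_range_succ] at h2
    have hSn : S n = ∑ j ∈ Finset.range n, kj j * (b j - a j) := rfl
    rw [← hSn] at h1 h2
    have hkt : k * t ≤ k * a (n+1) := mul_le_mul_of_nonneg_left hn0.le hk.le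
    rcases le_total t (b n) with hc | hc
    · rw [min_eq_left hc]
      rcases le_total k (kj n) with hs | hs
      · nlinarith [mul_nonneg (sub_nonneg.mpr hlow) (sub_nonneg.mpr hs)]
      · have hba' := hba n
        nlinarith [mul_nonneg (sub_nonneg.mpr hc) (sub_nonneg.mpr hs)]
    · rw [min_eq_right hc]
      linarith [h2, hkt]
end

section
/- Let $k_B(\omega) = \sum_{j=1}^\infty k_j \chi_{[a_j,b_j]}(\omega)$ with $0=a_1<b_1\le a_2<b_2\le\cdots$, $(a_j)$ unbounded, and $(k_j)\subset\mathbb{R}_{>0}$ bounded. Fix $k>0$. Then there exists $M>0$ such that $e^{-\int_\omega^{\omega+t} k_B(\tau)\,d\tau} \le M e^{-kt}$ for all $\omega\ge 0$ and all $t\ge 0$ if and only if there exists $\tilde M>0$ such that $k(a_n - b_m) - \sum_{j=m+1}^{n-1} k_j(b_j-a_j) \le \tilde M$ for all $n,m\in\mathbb{N}$ with $n\ge m$. -/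
open MeasureTheory

noncomputable def KB (a b kj : ℕ → ℝ) : ℝ → ℝ :=
  fun τ => ∑' j : ℕ, Set.indicator (Set.Icc (a j) (b j)) (fun _ => kj j) τ

lemma amono {a b : ℕ → ℝ} (hord : ∀ j, a j < b j ∧ b j ≤ a (j + 1)) : Monotone a :=
  monotone_nat_of_le_succ fun j => ((hord j).1.le.trans (hord j).2)

lemma bmono {a b : ℕ → ℝ} (hord : ∀ j, a j < b j ∧ b j ≤ a (j + 1)) : Monotone b :=
  monotone_nat_of_le_succ fun j => (hord j).2.trans (hord (j+1)).1.le

lemma ble {a b : ℕ → ℝ} (hord : ∀ j, a j < b j ∧ b j ≤ a (j + 1)) {i j : ℕ}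
    (h : i < j) : b i ≤ a j :=
  (hord i).2.trans (amono hord h)

lemma KB_mem {a b kj : ℕ → ℝ} (hord : ∀ j, a j < b j ∧ b j ≤ a (j + 1)) {j : ℕ} {τ : ℝ}
    (h1 : a j < τ) (h2 : τ < b j) : KB a b kj τ = kj j := by
  unfold KB
  have hf : ∀ i : ℕ, i ≠ j → Set.indicator (Set.Icc (a i) (b i)) (fun _ => kj i) τ = 0 := by
    intro i hij
    apply Set.indicator_of_notMem
    intro hmem
    rcases lt_or_gt_of_ne hij with h | h
    · exact absurd (hmem.2.trans (ble hord h)) (not_le.2 h1)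
    · exact absurd hmem.1 (not_le.2 (lt_of_lt_of_le h2 (ble hord h)))
  rw [tsum_eq_single j hf]
  have hmem : τ ∈ Set.Icc (a j) (b j) := ⟨h1.le, h2.le⟩
  exact Set.indicator_of_mem hmem _

lemma KB_gap {a b kj : ℕ → ℝ} (hord : ∀ j, a j < b j ∧ b j ≤ a (j + 1)) {j : ℕ} {τ : ℝ}
    (h1 : b j < τ) (h2 : τ < a (j + 1)) : KB a b kj τ = 0 := by
  unfold KB
  have h : ∀ i : ℕ, Set.indicator (Set.Icc (a i) (b i)) (fun _ => kj i) τ = 0 := by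
    intro i
    apply Set.indicator_of_notMem
    intro hmem
    rcases le_or_gt i j with h | h
    · exact absurd hmem.2 (not_le.2 (lt_of_le_of_lt (bmono hord h) h1))
    · exact absurd hmem.1 (not_le.2 (lt_of_lt_of_le h2 (amono hord h)))
  rw [tsum_congr h, tsum_zero]

lemma KB_intg {a b : ℕ → ℝ} (kj : ℕ → ℝ) (hord : ∀ j, a j < b j ∧ b j ≤ a (j + 1))
    (hunbdd : ∀ M : ℝ, ∃ j, M < a j) (x y : ℝ) :
    IntervalIntegrable (KB a b kj) volume x y := by
  obtain ⟨J, hJ⟩ := hunbdd (max x y)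
  have hone : ∀ j : ℕ, IntervalIntegrable
      (fun τ => Set.indicator (Set.Icc (a j) (b j)) (fun _ => kj j) τ) volume x y := by
    intro j
    apply MeasureTheory.Integrable.intervalIntegrable
    rw [integrable_indicator_iff measurableSet_Icc]
    exact integrableOn_const measure_Icc_lt_top.ne
  have hfin0 := IntervalIntegrable.sum (μ := volume) (a := x) (b := y)
    (f := fun (j : ℕ) (τ : ℝ) => Set.indicator (Set.Icc (a j) (b j)) (fun _ => kj j) τ)
    (Finset.range J) (fun j _ => hone j)
  have hfe : (∑ j ∈ Finset.range J,
        fun τ => Set.indicator (Set.Icc (a j) (b j)) (fun _ => kj j) τ)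
      = fun τ => ∑ j ∈ Finset.range J,
        Set.indicator (Set.Icc (a j) (b j)) (fun _ => kj j) τ := by
    funext τ
    simp
  rw [hfe] at hfin0
  have hfin : IntervalIntegrable
      (fun τ => ∑ j ∈ Finset.range J, Set.indicator (Set.Icc (a j) (b j)) (fun _ => kj j) τ)
      volume x y := hfin0
  rw [intervalIntegrable_iff] at hfin ⊢
  apply hfin.congr_fun ?_ measurableSet_uIoc
  intro τ hτ
  have hτle : τ ≤ max x y := hτ.2
  symm
  unfold KB
  apply tsum_eq_sum
  intro i hi
  apply Set.indicator_of_notMem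
  intro hmem
  have hai : a J ≤ a i := amono hord (by simpa using hi)
  exact absurd hmem.1 (not_le.2 (lt_of_le_of_lt hτle (hJ.trans_le hai)))

lemma KB_const {a b kj : ℕ → ℝ} {x y c : ℝ} (hxy : x ≤ y)
    (h : ∀ τ ∈ Set.Ioo x y, KB a b kj τ = c) :
    ∫ τ in x..y, KB a b kj τ = c * (y - x) := by
  have h1 : ∀ᵐ (τ : ℝ) ∂volume, τ ≠ y := by
    simp [ae_iff]
  have h0 : ∀ᵐ (τ : ℝ) ∂volume, τ ∈ Set.uIoc x y → KB a b kj τ = c := by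
    filter_upwards [h1] with τ hτ hmem
    rw [Set.uIoc_of_le hxy] at hmem
    exact h τ ⟨hmem.1, lt_of_le_of_ne hmem.2 hτ⟩
  rw [intervalIntegral.integral_congr_ae h0, intervalIntegral.integral_const]
  rw [smul_eq_mul]; ring

lemma KB_sum {a b kj : ℕ → ℝ} (hord : ∀ j, a j < b j ∧ b j ≤ a (j + 1))
    (hunbdd : ∀ M : ℝ, ∃ j, M < a j) (m n : ℕ) (h : m + 1 ≤ n) :
    ∫ τ in (b m)..(a n), KB a b kj τ =
      ∑ j ∈ Finset.Ico (m + 1) n, kj j * (b j - a j) := by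
  induction n, h using Nat.le_induction with
  | base =>
      rw [Finset.Ico_self, Finset.sum_empty]
      rw [KB_const (hord m).2 (fun τ hτ => KB_gap hord hτ.1 hτ.2)]
      ring
  | succ n hn ih =>
      have i1 : ∫ τ in (a n)..(b n), KB a b kj τ = kj n * (b n - a n) :=
        KB_const (hord n).1.le (fun τ hτ => KB_mem hord hτ.1 hτ.2)
      have i2 : ∫ τ in (b n)..(a (n+1)), KB a b kj τ = 0 := by
        rw [KB_const (hord n).2 (fun τ hτ => KB_gap hord hτ.1 hτ.2)]; ring
      have add1 := intervalIntegral.integral_add_adjacent_intervals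
        (KB_intg kj hord hunbdd (a n) (b n)) (KB_intg kj hord hunbdd (b n) (a (n+1)))
      have add2 := intervalIntegral.integral_add_adjacent_intervals
        (KB_intg kj hord hunbdd (b m) (a n)) (KB_intg kj hord hunbdd (a n) (a (n+1)))
      rw [Finset.sum_Ico_succ_top hn]
      rw [← add2, ← add1, ih, i1, i2]
      ring

lemma seg_bound {a b kj : ℕ → ℝ} {k M' B : ℝ}
    (hord : ∀ j, a j < b j ∧ b j ≤ a (j + 1))
    (hunbdd : ∀ M : ℝ, ∃ j, M < a j)
    (hk : 0 < k) (hM' : 0 < M') (hB0 : 0 ≤ B)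
    (hgap : ∀ j, k * (a (j+1) - b j) ≤ M')
    (hB : ∀ j, (k - kj j) * (b j - a j) ≤ B)
    {n : ℕ} {x y : ℝ} (h1 : a n ≤ x) (h2 : x ≤ y) (h3 : y ≤ a (n+1)) (h4 : x ≤ b n) :
    k * (y - x) - ∫ τ in x..y, KB a b kj τ ≤ B + M' := by
  obtain ⟨w, hw⟩ : ∃ w : ℝ, w = min y (b n) := ⟨_, rfl⟩
  have hxw : x ≤ w := hw ▸ le_min h2 h4
  have hwy : w ≤ y := hw ▸ min_le_left _ _
  have hwb : w ≤ b n := hw ▸ min_le_right _ _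
  have i1 : ∫ τ in x..w, KB a b kj τ = kj n * (w - x) :=
    KB_const hxw (fun τ hτ =>
      KB_mem hord (lt_of_le_of_lt h1 hτ.1) (lt_of_lt_of_le hτ.2 hwb))
  have hval2 : ∀ τ ∈ Set.Ioo w y, KB a b kj τ = 0 := by
    intro τ hτ
    have hbn : b n < τ := by
      rcases le_total y (b n) with h | h
      · exfalso
        have he : w = y := hw.trans (min_eq_left h)
        rw [he] at hτ
        exact absurd hτ.2 (not_lt.2 hτ.1.le)
      · have he : w = b n := hw.trans (min_eq_right h)
        rw [he] at hτ
        exact hτ.1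
    exact KB_gap hord hbn (hτ.2.trans_le h3)
  have i2 : ∫ τ in w..y, KB a b kj τ = 0 := by
    rw [KB_const hwy hval2]; ring
  have hadd := intervalIntegral.integral_add_adjacent_intervals
    (KB_intg kj hord hunbdd x w) (KB_intg kj hord hunbdd w y)
  have hA : k * (y - w) ≤ M' := by
    rcases le_total y (b n) with h | h
    · have he : w = y := hw.trans (min_eq_left h)
      rw [he]
      simpa using hM'.le
    · have he : w = b n := hw.trans (min_eq_right h)
      rw [he]
      have hg := hgap n
      nlinarith [mul_nonneg hk.le (sub_nonneg.2 h3)]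
  have hB' : (k - kj n) * (w - x) ≤ B := by
    rcases le_total (kj n) k with h | h
    · have h5 : w - x ≤ b n - a n := by linarith
      have h6 := mul_le_mul_of_nonneg_left h5 (by linarith : (0:ℝ) ≤ k - kj n)
      linarith [hB n]
    · have h7 := mul_nonneg (sub_nonneg.2 h) (sub_nonneg.2 hxw)
      nlinarith [hB0]
  have expand : k * (y - x) - (kj n * (w - x) + 0)
      = k * (y - w) + (k - kj n) * (w - x) := by ring
  rw [← hadd, i1, i2]
  linarith

lemma pre_bound {a b kj : ℕ → ℝ} {k M' B : ℝ}
    (hord : ∀ j, a j < b j ∧ b j ≤ a (j + 1))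
    (hunbdd : ∀ M : ℝ, ∃ j, M < a j)
    (hk : 0 < k) (hM' : 0 < M') (hB0 : 0 ≤ B)
    (hgap : ∀ j, k * (a (j+1) - b j) ≤ M')
    (hB : ∀ j, (k - kj j) * (b j - a j) ≤ B)
    (ha0 : a 0 = 0) {m : ℕ} {x : ℝ} (h0 : 0 ≤ x) (h1 : x ≤ b m)
    (h2 : ∀ i, i < m → b i < x) :
    k * (b m - x) - ∫ τ in x..(b m), KB a b kj τ ≤ B + M' := by
  obtain ⟨u, hu⟩ : ∃ u : ℝ, u = max x (a m) := ⟨_, rfl⟩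
  have hxu : x ≤ u := hu ▸ le_max_left _ _
  have hub : u ≤ b m := hu ▸ max_le h1 (hord m).1.le
  have hau : a m ≤ u := hu ▸ le_max_right _ _
  have i2 : ∫ τ in u..(b m), KB a b kj τ = kj m * (b m - u) :=
    KB_const hub (fun τ hτ =>
      KB_mem hord (lt_of_le_of_lt hau hτ.1) hτ.2)
  have hval1 : ∀ τ ∈ Set.Ioo x u, KB a b kj τ = 0 := by
    intro τ hτ
    have hxa : τ < a m := by
      rcases le_total (a m) x with h | h
      · exfalso
        have he : u = x := hu.trans (max_eq_left h)
        rw [he] at hτ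
        exact absurd hτ.2 (not_lt.2 hτ.1.le)
      · have he : u = a m := hu.trans (max_eq_right h)
        rw [he] at hτ
        exact hτ.2
    cases m with
    | zero =>
        exfalso
        rw [ha0] at hxa
        exact absurd (hτ.1.trans hxa) (not_lt.2 h0)
    | succ m' =>
        exact KB_gap hord (lt_of_lt_of_le (h2 m' (Nat.lt_succ_self m')) hτ.1.le) hxa
  have i1 : ∫ τ in x..u, KB a b kj τ = 0 := by
    rw [KB_const hxu hval1]; ring
  have hadd := intervalIntegral.integral_add_adjacent_intervals
    (KB_intg kj hord hunbdd x u) (KB_intg kj hord hunbdd u (b m))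
  have hA : k * (u - x) ≤ M' := by
    rcases le_total (a m) x with h | h
    · have he : u = x := hu.trans (max_eq_left h)
      rw [he]
      simpa using hM'.le
    · have he : u = a m := hu.trans (max_eq_right h)
      rw [he]
      cases m with
      | zero =>
          rw [ha0] at h ⊢
          rw [show x = 0 from le_antisymm h h0]
          simpa using hM'.le
      | succ m' =>
          have hb' : b m' < x := h2 m' (Nat.lt_succ_self m')
          have hg := hgap m'
          nlinarith [mul_nonneg hk.le (by linarith : (0:ℝ) ≤ x - b m')]
  have hB' : (k - kj m) * (b m - u) ≤ B := by
    rcases le_total (kj m) k with h | h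
    · have h5 : b m - u ≤ b m - a m := by linarith
      have h6 := mul_le_mul_of_nonneg_left h5 (by linarith : (0:ℝ) ≤ k - kj m)
      linarith [hB m]
    · have h7 := mul_nonneg (sub_nonneg.2 h) (sub_nonneg.2 hub)
      nlinarith [hB0]
  have expand : k * (b m - x) - (0 + kj m * (b m - u))
      = k * (u - x) + (k - kj m) * (b m - u) := by ring
  rw [← hadd, i1, i2]
  linarith

/-- Shift-uniform characterization of exponential decay of `e^{-∫_ω^{ω+t} k_B}` for a
piecewise constant damping `k_B = ∑ⱼ kⱼ χ_{[aⱼ,bⱼ]}`: decay with rate `k`, uniformly in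
the starting point `ω ≥ 0`, holds iff `k(aₙ - bₘ) - ∑_{m<j<n} kⱼ(bⱼ-aⱼ)` is bounded. -/
theorem stmt_5 (a b kj : ℕ → ℝ) (k : ℝ) (hk : 0 < k)
    (ha0 : a 0 = 0)
    (horder : ∀ j, a j < b j ∧ b j ≤ a (j + 1))
    (hunbdd : ∀ M : ℝ, ∃ j, M < a j)
    (hkpos : ∀ j, 0 < kj j)
    (hkbdd : ∃ C : ℝ, ∀ j, kj j ≤ C) :
    (∃ M > (0:ℝ), ∀ ω : ℝ, 0 ≤ ω → ∀ t : ℝ, 0 ≤ t →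
        Real.exp (-∫ τ in ω..(ω + t),
            ∑' j : ℕ, Set.indicator (Set.Icc (a j) (b j)) (fun _ => kj j) τ) ≤
          M * Real.exp (-k * t)) ↔
    (∃ M' > (0:ℝ), ∀ n m : ℕ, m ≤ n →
        k * (a n - b m) - ∑ j ∈ Finset.Ico (m + 1) n, kj j * (b j - a j) ≤ M') := by
  classical
  have hanonneg : ∀ j, 0 ≤ a j := fun j => ha0 ▸ amono horder (Nat.zero_le j)
  constructor
  · rintro ⟨M, hM0, hM⟩
    refine ⟨max (Real.log M) 1, lt_of_lt_of_le one_pos (le_max_right _ _), ?_⟩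
    intro n m hmn
    rcases eq_or_lt_of_le hmn with rfl | hlt
    · rw [Finset.Ico_eq_empty (by omega), Finset.sum_empty]
      have h1 := (horder m).1
      have h2 : (1:ℝ) ≤ max (Real.log M) 1 := le_max_right _ _
      nlinarith [mul_pos hk (sub_pos.2 h1)]
    · have hbm0 : (0:ℝ) ≤ b m := le_trans (hanonneg m) (horder m).1.le
      have htn : 0 ≤ a n - b m := sub_nonneg.2 (ble horder hlt)
      have h2 := hM (b m) hbm0 (a n - b m) htn
      rw [show b m + (a n - b m) = a n from by ring] at h2
      have h2' : Real.exp (-∫ τ in (b m)..(a n), KB a b kj τ)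
          ≤ M * Real.exp (-k * (a n - b m)) := h2
      rw [KB_sum horder hunbdd m n hlt] at h2'
      have h3 : Real.exp (k * (a n - b m)
          - ∑ j ∈ Finset.Ico (m + 1) n, kj j * (b j - a j)) ≤ M := by
        calc Real.exp (k * (a n - b m) - ∑ j ∈ Finset.Ico (m + 1) n, kj j * (b j - a j))
            = Real.exp (-(∑ j ∈ Finset.Ico (m + 1) n, kj j * (b j - a j)))
              * Real.exp (k * (a n - b m)) := by
              rw [← Real.exp_add]
              congr 1
              ring
          _ ≤ (M * Real.exp (-k * (a n - b m))) * Real.exp (k * (a n - b m)) :=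
              mul_le_mul_of_nonneg_right h2' (Real.exp_pos _).le
          _ = M := by rw [mul_assoc, ← Real.exp_add]; simp
      have h4 := (Real.le_log_iff_exp_le hM0).2 h3
      exact h4.trans (le_max_left _ _)
  · rintro ⟨M', hM'0, hM'⟩
    have hgap : ∀ j, k * (a (j+1) - b j) ≤ M' := by
      intro j
      have h := hM' (j+1) j (Nat.le_succ j)
      simpa [Finset.Ico_self] using h
    have hB0 : (0:ℝ) ≤ max M' (k * b 0) := le_trans hM'0.le (le_max_left _ _)
    have hB : ∀ j, (k - kj j) * (b j - a j) ≤ max M' (k * b 0) := by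
      intro j
      cases j with
      | zero =>
          have h1 := (horder 0).1
          have h2 := hkpos 0
          have h3 : k * b 0 ≤ max M' (k * b 0) := le_max_right _ _
          rw [ha0] at h1 ⊢
          nlinarith
      | succ j' =>
          have h := hM' (j'+2) j' (by omega)
          rw [show Finset.Ico (j'+1) (j'+2) = {j'+1} from Nat.Ico_succ_singleton (j'+1),
            Finset.sum_singleton] at h
          have hb1 : b j' ≤ a (j'+1) := (horder j').2
          have hb2 : b (j'+1) ≤ a (j'+2) := (horder (j'+1)).2
          have hM'B : M' ≤ max M' (k * b 0) := le_max_left _ _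
          nlinarith [mul_nonneg hk.le (sub_nonneg.2 hb2),
            mul_nonneg hk.le (sub_nonneg.2 hb1)]
    refine ⟨Real.exp (2 * max M' (k * b 0) + 3 * M'),
      Real.exp_pos _, ?_⟩
    intro ω hω t ht
    have hy0 : 0 ≤ ω + t := by linarith
    obtain ⟨n, han, hyn⟩ : ∃ n, a n ≤ ω + t ∧ ω + t < a (n + 1) := by
      have hexN : ∃ j, ω + t < a j := hunbdd (ω + t)
      have hNy := Nat.find_spec hexN
      have hN0 : Nat.find hexN ≠ 0 := by
        intro h
        rw [h, ha0] at hNy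
        linarith
      refine ⟨Nat.find hexN - 1, not_lt.1 (Nat.find_min hexN (by omega)), ?_⟩
      have heq : Nat.find hexN - 1 + 1 = Nat.find hexN := by omega
      rw [heq]
      exact hNy
    obtain ⟨m, hxm, hmlt⟩ : ∃ m, ω ≤ b m ∧ ∀ i, i < m → b i < ω := by
      have hexm : ∃ j, ω ≤ b j := by
        obtain ⟨j, hj⟩ := hunbdd ω
        exact ⟨j, le_of_lt (hj.trans (horder j).1)⟩
      exact ⟨Nat.find hexm, Nat.find_spec hexm,
        fun i hi => not_le.1 (Nat.find_min hexm hi)⟩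
    have hxy : ω ≤ ω + t := by linarith
    have key : k * t - ∫ τ in ω..(ω + t), KB a b kj τ
        ≤ 2 * max M' (k * b 0) + 3 * M' := by
      rcases lt_or_ge n m with hnm | hmn
      · -- gap case: [ω, ω+t] ⊆ (b n, a (n+1))
        have hbnx : b n < ω := hmlt n hnm
        have i0 : ∫ τ in ω..(ω + t), KB a b kj τ = 0 := by
          rw [KB_const hxy (fun τ hτ =>
            KB_gap horder (hbnx.trans hτ.1) (hτ.2.trans hyn))]
          ring
        rw [i0]
        have hg := hgap n
        nlinarith [mul_nonneg hk.le (by linarith : (0:ℝ) ≤ (a (n+1) - b n) - t),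
          hM'0, hB0]
      · rcases eq_or_lt_of_le hmn with heq | hlt
        · -- m = n
          subst heq
          rcases le_or_gt (a m) ω with hax | hax
          · have hs := seg_bound horder hunbdd hk hM'0 hB0 hgap hB
              hax hxy hyn.le hxm
            linarith
          · have hm0 : m ≠ 0 := by
              intro h
              rw [h, ha0] at hax
              exact absurd hax (not_lt.2 hω)
            obtain ⟨n', rfl⟩ : ∃ n', m = n' + 1 := ⟨m - 1, by omega⟩
            have hb' : b n' < ω := hmlt n' (Nat.lt_succ_self n')
            have i1 : ∫ τ in ω..(a (n'+1)), KB a b kj τ = 0 := by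
              rw [KB_const hax.le (fun τ hτ =>
                KB_gap horder (hb'.trans hτ.1) hτ.2)]
              ring
            have hseg := seg_bound horder hunbdd hk hM'0 hB0 hgap hB
              (le_refl (a (n'+1))) han hyn.le (horder (n'+1)).1.le
            have hadd := intervalIntegral.integral_add_adjacent_intervals
              (KB_intg kj horder hunbdd ω (a (n'+1)))
              (KB_intg kj horder hunbdd (a (n'+1)) (ω + t))
            have hA : k * (a (n'+1) - ω) ≤ M' := by
              have hg := hgap n'
              nlinarith [mul_nonneg hk.le (by linarith : (0:ℝ) ≤ ω - b n')]
            rw [← hadd, i1]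
            linarith
        · -- m < n
          have hseg := seg_bound horder hunbdd hk hM'0 hB0 hgap hB
            (le_refl (a n)) han hyn.le (horder n).1.le
          have hpre := pre_bound horder hunbdd hk hM'0 hB0 hgap hB ha0 hω hxm hmlt
          have hmid : k * (a n - b m) - ∫ τ in (b m)..(a n), KB a b kj τ ≤ M' := by
            rw [KB_sum horder hunbdd m n hlt]
            exact hM' n m hmn
          have hadd1 := intervalIntegral.integral_add_adjacent_intervals
            (KB_intg kj horder hunbdd ω (b m)) (KB_intg kj horder hunbdd (b m) (a n))
          have hadd2 := intervalIntegral.integral_add_adjacent_intervals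
            (KB_intg kj horder hunbdd ω (a n)) (KB_intg kj horder hunbdd (a n) (ω + t))
          rw [← hadd2, ← hadd1]
          linarith
    show Real.exp (-∫ τ in ω..(ω + t), KB a b kj τ)
        ≤ Real.exp (2 * max M' (k * b 0) + 3 * M') * Real.exp (-k * t)
    rw [← Real.exp_add]
    apply Real.exp_le_exp.2
    linarith
end

section
/- Let $\Omega_c = \bigcup_{j\in\mathbb{N}}[a_j,b_j]\subset\mathbb{R}_{\ge 0}$ with $0=a_1<b_1\le a_2<b_2\le\cdots$ and $(a_j)$ unbounded. The following are equivalent: (ii) there exist constants $K>k>0$ such that $k(a_n-b_m) - K\sum_{j=m+1}^{n-1}(b_j-a_j) \le 1$ for all $n\ge m$ in $\mathbb{N}$; (iii) there exist constants $c_0,c_1>0$ such that $|\Omega_c\cap I| \ge c_1|I| - c_0$ for every interval $I\subset\mathbb{R}_{\ge 0}$. -/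
open MeasureTheory Set

private lemma stmt6_ba {a b : ℕ → ℝ} (horder : ∀ j, a j < b j ∧ b j ≤ a (j + 1)) :
    ∀ i j : ℕ, i < j → b i ≤ a j := by
  intro i j hij
  induction j with
  | zero => omega
  | succ j ih =>
    rcases Nat.lt_succ_iff_lt_or_eq.mp hij with h | h
    · exact (ih h).trans ((horder j).1.le.trans (horder j).2)
    · subst h; exact (horder i).2

private lemma stmt6_amono {a b : ℕ → ℝ} (horder : ∀ j, a j < b j ∧ b j ≤ a (j + 1)) :
    ∀ i j : ℕ, i ≤ j → a i ≤ a j := by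
  intro i j h
  rcases h.lt_or_eq with h | h
  · exact (horder i).1.le.trans (stmt6_ba horder i j h)
  · rw [h]

private lemma stmt6_bmono {a b : ℕ → ℝ} (horder : ∀ j, a j < b j ∧ b j ≤ a (j + 1)) :
    ∀ i j : ℕ, i ≤ j → b i ≤ b j := by
  intro i j h
  rcases h.lt_or_eq with h | h
  · exact (stmt6_ba horder i j h).trans (horder j).1.le
  · rw [h]

private lemma stmt6_toReal_le {S : Set ℝ} {x y r : ℝ} (hS : S ⊆ Icc x y)
    (hr : ENNReal.ofReal r ≤ volume S) : r ≤ (volume S).toReal := by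
  have hfin : volume S ≠ ⊤ := by
    refine ((measure_mono hS).trans_lt ?_).ne
    simp [Real.volume_Icc]
  calc r ≤ (ENNReal.ofReal r).toReal := by
        rcases le_or_gt 0 r with h | h
        · simp [ENNReal.toReal_ofReal h]
        · simp only [ENNReal.ofReal_eq_zero.mpr h.le, ENNReal.toReal_zero]
          linarith
    _ ≤ (volume S).toReal := ENNReal.toReal_mono hfin hr

/-- Upper bound: the measure of `Ω ∩ [b m, a n]` is at most the sum of lengths of the
interior intervals. -/
private lemma stmt6_upper {a b : ℕ → ℝ} (horder : ∀ j, a j < b j ∧ b j ≤ a (j + 1))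
    (m n : ℕ) :
    (volume ((⋃ j : ℕ, Icc (a j) (b j)) ∩ Icc (b m) (a n))).toReal ≤
      ∑ j ∈ Finset.Ico (m + 1) n, (b j - a j) := by
  have hsum_nonneg : (0:ℝ) ≤ ∑ j ∈ Finset.Ico (m + 1) n, (b j - a j) :=
    Finset.sum_nonneg fun j _ => by linarith [(horder j).1]
  have hsub : (⋃ j : ℕ, Icc (a j) (b j)) ∩ Icc (b m) (a n) ⊆
      (⋃ j ∈ Finset.Ico (m + 1) n, Icc (a j) (b j)) ∪ ({b m, a n} : Set ℝ) := by
    rintro t ⟨ht1, ht2⟩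
    obtain ⟨_, ⟨j, rfl⟩, htj⟩ := ht1
    simp only [mem_Icc] at htj ht2
    rcases le_or_gt j m with hjm | hjm
    · right
      have : b j ≤ b m := stmt6_bmono horder j m hjm
      left
      linarith [ht2.1, htj.2]
    · rcases le_or_gt n j with hnj | hnj
      · right; right
        have : a n ≤ a j := stmt6_amono horder n j hnj
        have : t = a n := le_antisymm ht2.2 (by linarith [htj.1])
        simp [this]
      · left
        refine mem_biUnion (Finset.mem_Ico.mpr ⟨hjm, hnj⟩) ?_
        exact mem_Icc.mpr htj
  have hle : volume ((⋃ j : ℕ, Icc (a j) (b j)) ∩ Icc (b m) (a n)) ≤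
      ENNReal.ofReal (∑ j ∈ Finset.Ico (m + 1) n, (b j - a j)) := by
    calc volume ((⋃ j : ℕ, Icc (a j) (b j)) ∩ Icc (b m) (a n))
        ≤ volume ((⋃ j ∈ Finset.Ico (m + 1) n, Icc (a j) (b j)) ∪ ({b m, a n} : Set ℝ)) :=
          measure_mono hsub
      _ ≤ volume (⋃ j ∈ Finset.Ico (m + 1) n, Icc (a j) (b j)) +
            volume ({b m, a n} : Set ℝ) := measure_union_le _ _
      _ = volume (⋃ j ∈ Finset.Ico (m + 1) n, Icc (a j) (b j)) := by
          have hz : volume ({b m, a n} : Set ℝ) = 0 :=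
            ((Set.finite_singleton (a n)).insert (b m)).measure_zero volume
          rw [hz, add_zero]
      _ ≤ ∑ j ∈ Finset.Ico (m + 1) n, volume (Icc (a j) (b j)) :=
          measure_biUnion_finset_le _ _
      _ = ∑ j ∈ Finset.Ico (m + 1) n, ENNReal.ofReal (b j - a j) := by
          simp [Real.volume_Icc]
      _ = ENNReal.ofReal (∑ j ∈ Finset.Ico (m + 1) n, (b j - a j)) :=
          (ENNReal.ofReal_sum_of_nonneg fun j _ => by linarith [(horder j).1]).symm
  calc (volume ((⋃ j : ℕ, Icc (a j) (b j)) ∩ Icc (b m) (a n))).toReal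
      ≤ (ENNReal.ofReal (∑ j ∈ Finset.Ico (m + 1) n, (b j - a j))).toReal :=
        ENNReal.toReal_mono ENNReal.ofReal_ne_top hle
    _ = ∑ j ∈ Finset.Ico (m + 1) n, (b j - a j) := ENNReal.toReal_ofReal hsum_nonneg

/-- Equivalence of the discrete gap condition (ii) and the lower linear density
condition (iii) for the control domain `Ω_c = ⋃ⱼ [aⱼ, bⱼ] ⊆ ℝ₊`. -/
theorem stmt_6 (a b : ℕ → ℝ) (ha0 : a 0 = 0)
    (horder : ∀ j, a j < b j ∧ b j ≤ a (j + 1))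
    (hunbdd : ∀ M : ℝ, ∃ j, M < a j) :
    (∃ k K : ℝ, 0 < k ∧ k < K ∧ ∀ n m : ℕ, m ≤ n →
        k * (a n - b m) - K * ∑ j ∈ Finset.Ico (m + 1) n, (b j - a j) ≤ 1) ↔
    (∃ c0 c1 : ℝ, 0 < c0 ∧ 0 < c1 ∧ ∀ x y : ℝ, 0 ≤ x → x ≤ y →
        c1 * (y - x) - c0 ≤
          (volume ((⋃ j : ℕ, Set.Icc (a j) (b j)) ∩ Set.Icc x y)).toReal) := by
  have hba := stmt6_ba horder
  have hamono := stmt6_amono horder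
  have hbmono := stmt6_bmono horder
  have ha_nonneg : ∀ j, 0 ≤ a j := fun j => ha0 ▸ hamono 0 j (Nat.zero_le j)
  constructor
  · rintro ⟨k, K, hk, hkK, hii⟩
    have hK : 0 < K := hk.trans hkK
    have hgap : ∀ j, a (j + 1) - b j ≤ 1 / k := by
      intro j
      have h := hii (j + 1) j (by omega)
      rw [Finset.Ico_self, Finset.sum_empty] at h
      rw [le_div_iff₀ hk]
      linarith
    refine ⟨1 / K + 2 / k, k / K, by positivity, by positivity, ?_⟩
    intro x y hx hxy
    -- least m with x ≤ b m
    obtain ⟨m, hxbm, hmmin⟩ : ∃ m : ℕ, x ≤ b m ∧ ∀ i, i < m → b i < x := by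
      have hbx : ∃ j, x ≤ b j := by
        obtain ⟨j, hj⟩ := hunbdd x
        exact ⟨j, hj.le.trans (horder j).1.le⟩
      exact ⟨Nat.find hbx, Nat.find_spec hbx, fun i hi =>
        lt_of_not_ge (Nat.find_min hbx hi)⟩
    -- greatest n with a n ≤ y
    obtain ⟨n, hany, hyan1⟩ : ∃ n : ℕ, a n ≤ y ∧ y < a (n + 1) := by
      have hay : ∃ j, y < a j := hunbdd y
      have hyN : y < a (Nat.find hay) := Nat.find_spec hay
      have hN0 : Nat.find hay ≠ 0 := by
        intro h
        rw [h, ha0] at hyN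
        linarith
      refine ⟨Nat.find hay - 1, not_lt.mp (Nat.find_min hay (by omega)), ?_⟩
      rwa [show Nat.find hay - 1 + 1 = Nat.find hay by omega]
    -- the two boundary gap bounds
    have h1 : max x (a m) - x ≤ 1 / k := by
      rcases le_total (a m) x with h | h
      · rw [max_eq_left h]
        simp only [sub_self]
        positivity
      · rw [max_eq_right h]
        rcases Nat.eq_zero_or_pos m with h0 | h0
        · rw [h0, ha0]; linarith [one_div_pos.mpr hk]
        · have hb1 := hmmin (m - 1) (by omega)
          have hg1 := hgap (m - 1)
          rw [show m - 1 + 1 = m by omega] at hg1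
          linarith
    have h2 : y - min y (b n) ≤ 1 / k := by
      rcases le_total y (b n) with h | h
      · rw [min_eq_left h]
        simp only [sub_self]
        positivity
      · rw [min_eq_right h]
        have := hgap n
        linarith
    have hsubxy : (⋃ j : ℕ, Icc (a j) (b j)) ∩ Icc x y ⊆ Icc x y := inter_subset_right
    rcases lt_or_ge n m with hcase | hcase
    · -- [x, y] lies in a single gap
      have hbnx : b n < x := hmmin n hcase
      have hyx : y - x ≤ 1 / k := by
        have := hgap n
        linarith
      have hT : (0:ℝ) ≤ (volume ((⋃ j : ℕ, Icc (a j) (b j)) ∩ Icc x y)).toReal :=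
        ENNReal.toReal_nonneg
      have hw : k / K * (y - x) ≤ k / K * (1 / k) :=
        mul_le_mul_of_nonneg_left hyx (by positivity)
      have he : k / K * (1 / k) = 1 / K := by field_simp
      have h2k : (0:ℝ) ≤ 2 / k := by positivity
      linarith
    · -- m ≤ n
      have hwle : k / K * K = k := by field_simp
      rcases eq_or_lt_of_le hcase with heq | hlt
      · -- m = n : single interval case
        subst heq
        have hr : ENNReal.ofReal (min y (b m) - max x (a m)) ≤
            volume ((⋃ j : ℕ, Icc (a j) (b j)) ∩ Icc x y) := by
          rw [← Real.volume_Icc]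
          refine measure_mono ?_
          rintro t ⟨ht1, ht2⟩
          refine ⟨mem_iUnion.mpr ⟨m, ?_⟩, ?_⟩
          · exact ⟨le_trans (le_max_right _ _) ht1, ht2.trans (min_le_right _ _)⟩
          · exact ⟨le_trans (le_max_left _ _) ht1, ht2.trans (min_le_left _ _)⟩
        have hT := stmt6_toReal_le hsubxy hr
        have hp : k / K * (y - x) ≤ y - x :=
          mul_le_of_le_one_left (sub_nonneg.mpr hxy) ((div_le_one hK).mpr hkK.le)
        have h1K : 0 < 1 / K := by positivity
        have h2k : (2:ℝ) / k = 1 / k + 1 / k := by ring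
        linarith
      · -- m < n : three pieces
        set F := Finset.Ico (m + 1) n with hF
        set S := ∑ j ∈ F, (b j - a j) with hS
        have hS0 : (0:ℝ) ≤ S :=
          Finset.sum_nonneg fun j _ => by linarith [(horder j).1]
        set r1 := b m - max x (a m) with hr1
        set r3 := min y (b n) - a n with hr3
        have hr10 : 0 ≤ r1 := by
          rw [hr1]
          rcases le_total (a m) x with h | h
          · rw [max_eq_left h]; linarith
          · rw [max_eq_right h]; linarith [(horder m).1]
        have hr30 : 0 ≤ r3 := by
          rw [hr3]
          rcases le_total y (b n) with h | h
          · rw [min_eq_left h]; linarith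
          · rw [min_eq_right h]; linarith [(horder n).1]
        have hbman : b m ≤ a n := hba m n hlt
        -- the three disjoint pieces
        have hIoodisj : ∀ i j : ℕ, i < j →
            Disjoint (Ioo (a i) (b i)) (Ioo (a j) (b j)) := by
          intro i j hij
          rw [Set.disjoint_left]
          rintro t ⟨_, h1⟩ ⟨h2, _⟩
          have := hba i j hij
          linarith
        have hUmeas : MeasurableSet (⋃ j ∈ F, Ioo (a j) (b j)) :=
          F.measurableSet_biUnion fun j _ => measurableSet_Ioo
        have hvolU : volume (⋃ j ∈ F, Ioo (a j) (b j)) = ENNReal.ofReal S := by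
          have hpd : (↑F : Set ℕ).PairwiseDisjoint fun j => Ioo (a j) (b j) := by
            intro i _ j _ hij
            exact hij.lt_or_gt.elim (hIoodisj i j) fun h => (hIoodisj j i h).symm
          rw [measure_biUnion_finset hpd fun j _ => measurableSet_Ioo]
          calc ∑ p ∈ F, volume (Ioo (a p) (b p))
              = ∑ p ∈ F, ENNReal.ofReal (b p - a p) := by simp [Real.volume_Ioo]
            _ = ENNReal.ofReal S :=
              (ENNReal.ofReal_sum_of_nonneg fun j _ => by linarith [(horder j).1]).symm
        have hd2 : Disjoint (⋃ j ∈ F, Ioo (a j) (b j)) (Icc (a n) (min y (b n))) := by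
          rw [Set.disjoint_left]
          rintro t ht ⟨h2, _⟩
          obtain ⟨_, ⟨j, rfl⟩, _, ⟨hjF, rfl⟩, _, htj⟩ := ht
          have : b j ≤ a n := by
            rcases Finset.mem_Ico.mp hjF with ⟨_, hjn⟩
            rcases eq_or_lt_of_le (Nat.succ_le_of_lt hjn) with h | h
            · exact h ▸ (horder j).2
            · exact ((horder j).2).trans (hamono (j+1) n (by omega))
          linarith
        have hd1 : Disjoint (Ico (max x (a m)) (b m))
            ((⋃ j ∈ F, Ioo (a j) (b j)) ∪ Icc (a n) (min y (b n))) := by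
          rw [Set.disjoint_left]
          rintro t ⟨_, ht2⟩ hu
          rcases hu with hu | hu
          · obtain ⟨_, ⟨j, rfl⟩, _, ⟨hjF, rfl⟩, htj, _⟩ := hu
            have : b m ≤ a j :=
              (horder m).2.trans (hamono (m+1) j (Finset.mem_Ico.mp hjF).1)
            linarith
          · linarith [hu.1]
        have hsub : Ico (max x (a m)) (b m) ∪
            ((⋃ j ∈ F, Ioo (a j) (b j)) ∪ Icc (a n) (min y (b n))) ⊆
            (⋃ j : ℕ, Icc (a j) (b j)) ∩ Icc x y := by
          rintro t (⟨ht1, ht2⟩ | (hu | ⟨ht1, ht2⟩))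
          · refine ⟨mem_iUnion.mpr ⟨m, le_trans (le_max_right _ _) ht1, ht2.le⟩,
              le_trans (le_max_left _ _) ht1, ?_⟩
            linarith
          · obtain ⟨_, ⟨j, rfl⟩, _, ⟨hjF, rfl⟩, htj1, htj2⟩ := hu
            rcases Finset.mem_Ico.mp hjF with ⟨hj1, hj2⟩
            have hbmaj : b m ≤ a j := (horder m).2.trans (hamono (m+1) j hj1)
            have hbjan : b j ≤ a n := by
              rcases eq_or_lt_of_le (Nat.succ_le_of_lt hj2) with h | h
              · exact h ▸ (horder j).2
              · exact ((horder j).2).trans (hamono (j+1) n (by omega))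
            exact ⟨mem_iUnion.mpr ⟨j, htj1.le, htj2.le⟩,
              by linarith, by linarith⟩
          · exact ⟨mem_iUnion.mpr ⟨n, ht1, ht2.trans (min_le_right _ _)⟩,
              by linarith, ht2.trans (min_le_left _ _)⟩
        have hr : ENNReal.ofReal (r1 + (S + r3)) ≤
            volume ((⋃ j : ℕ, Icc (a j) (b j)) ∩ Icc x y) := by
          calc ENNReal.ofReal (r1 + (S + r3))
              = ENNReal.ofReal r1 + (ENNReal.ofReal S + ENNReal.ofReal r3) := by
                rw [ENNReal.ofReal_add hr10 (by linarith),
                  ENNReal.ofReal_add hS0 hr30]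
            _ = volume (Ico (max x (a m)) (b m)) +
                  (volume (⋃ j ∈ F, Ioo (a j) (b j)) +
                    volume (Icc (a n) (min y (b n)))) := by
                rw [Real.volume_Ico, Real.volume_Icc, hvolU]
            _ = volume (Ico (max x (a m)) (b m) ∪
                  ((⋃ j ∈ F, Ioo (a j) (b j)) ∪ Icc (a n) (min y (b n)))) := by
                rw [measure_union hd1 (hUmeas.union measurableSet_Icc),
                  measure_union hd2 measurableSet_Icc]
            _ ≤ volume ((⋃ j : ℕ, Icc (a j) (b j)) ∩ Icc x y) := measure_mono hsub
        have hT := stmt6_toReal_le hsubxy hr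
        -- arithmetic
        have hSlow : k / K * (a n - b m) - 1 / K ≤ S := by
          have hii' := hii n m hcase
          rw [← hS] at hii'
          have hd : (k * (a n - b m) - 1) / K ≤ S :=
            (div_le_iff₀ hK).mpr (by linarith)
          rw [div_mul_eq_mul_div, ← sub_div]
          exact hd
        have hp1 : k / K * (b m - x) ≤ b m - x :=
          mul_le_of_le_one_left (sub_nonneg.mpr hxbm) ((div_le_one hK).mpr hkK.le)
        have hp3 : k / K * (y - a n) ≤ y - a n :=
          mul_le_of_le_one_left (sub_nonneg.mpr hany) ((div_le_one hK).mpr hkK.le)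
        have he : k / K * (y - x) =
            k / K * (b m - x) + k / K * (a n - b m) + k / K * (y - a n) := by ring
        have hr1b : b m - x - 1 / k ≤ r1 := by rw [hr1]; linarith
        have hr3b : y - a n - 1 / k ≤ r3 := by rw [hr3]; linarith
        have h2k : (2:ℝ) / k = 1 / k + 1 / k := by ring
        linarith
  · rintro ⟨c0, c1, hc0, hc1, hiii⟩
    have h1c0 : 0 < 1 / c0 := by positivity
    refine ⟨c1 / c0, 1 / c0 + c1 / c0 + 1, by positivity, by linarith, ?_⟩
    intro n m hmn
    rcases eq_or_lt_of_le hmn with heq | hlt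
    · subst heq
      rw [show Finset.Ico (m + 1) m = ∅ from Finset.Ico_eq_empty (by omega),
        Finset.sum_empty, mul_zero, sub_zero]
      have := (horder m).1
      nlinarith [div_pos hc1 hc0]
    · have hbm0 : 0 ≤ b m := (ha_nonneg m).trans (horder m).1.le
      have hxy := hiii (b m) (a n) hbm0 (hba m n hlt)
      have hup := stmt6_upper horder m n
      set S := ∑ j ∈ Finset.Ico (m + 1) n, (b j - a j) with hS
      have hS0 : (0:ℝ) ≤ S :=
        Finset.sum_nonneg fun j _ => by linarith [(horder j).1]
      have hkey : c1 / c0 * (a n - b m) - 1 / c0 * S ≤ 1 := by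
        have hd : (c1 * (a n - b m) - S) / c0 ≤ 1 := (div_le_one hc0).mpr (by linarith)
        rw [show c1 / c0 * (a n - b m) - 1 / c0 * S = (c1 * (a n - b m) - S) / c0 by ring]
        exact hd
      have hex : (0:ℝ) ≤ (c1 / c0 + 1) * S := mul_nonneg (by positivity) hS0
      have hdist : (1 / c0 + c1 / c0 + 1) * S = 1 / c0 * S + (c1 / c0 + 1) * S := by ring
      linarith
end

section
/- Let $c>0$, $L>0$, and $k_B\in L^\infty(\mathbb{R}_{>0},\mathbb{R}_{\ge 0})$ be piecewise constant supported on a countable union of intervals with $k_B|_{[0,L]}$ having total integral $\int_0^L k_B(y)\,dy \le \hat k \mu_c$ where $\mu_c := |\Omega_c| < \infty$ and $\hat k = \|k_B\|_\infty$. Consider the semigroup $(\mathcal{T}^\varphi_L(t)x^0)(\omega) = e^{-\frac{1}{c}\int_{\omega-ct}^\omega P_L(k_B|_{[0,L]})(y)dy} P_L(x^0)(\omega-ct)$. Then at time $t_L = L/c$ one has $\|\mathcal{T}^\varphi_L(t_L)x^0\|_{L^2([0,L])} \ge e^{-\hat k\mu_c/c}\|x^0\|_{L^2([0,L])}$ for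 all $x^0$; hence the family $(\mathcal{T}^\varphi_L)_{L>0}$ is not uniformly exponentially stable in $L$. -/
open MeasureTheory

/-- The `L`-periodization operator. -/
noncomputable def periodize (L : ℝ) (x : ℝ → ℝ) : ℝ → ℝ :=
  fun ω => x (ω - L * ((⌈ω / L⌉ : ℝ) - 1))

lemma periodize_periodic (L : ℝ) (hL : L ≠ 0) (f : ℝ → ℝ) :
    Function.Periodic (periodize L f) L := by
  intro y
  unfold periodize
  have h : (y + L) / L = y / L + 1 := by field_simp
  rw [h, Int.ceil_add_one]
  congr 1
  push_cast
  ring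

lemma periodize_eq (L : ℝ) (hL : 0 < L) (f : ℝ → ℝ) {ω : ℝ} (hω : ω ∈ Set.Ioc 0 L) :
    periodize L f ω = f ω := by
  have h1 : ⌈ω / L⌉ = 1 := by
    rw [Int.ceil_eq_iff]
    push_cast
    constructor
    · simpa using div_pos hω.1 hL
    · exact div_le_one_of_le₀ hω.2 hL.le
  unfold periodize
  rw [h1]
  norm_num

/-- A control region of finite total measure cannot yield domain-uniform exponential
stability: at time `t_L = L/c` the closed-loop transport semigroup satisfies
`‖𝒯^φ_L(t_L)x⁰‖ ≥ e^{-k̂ μ_c / c} ‖x⁰‖`. -/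
theorem stmt_8 (c L hatk μc : ℝ) (hc : 0 < c) (hL : 0 < L)
    (hhatk : 0 ≤ hatk) (hμc : 0 ≤ μc)
    (kB : ℝ → ℝ) (hkBmeas : Measurable kB) (hkBnn : ∀ ω, 0 ≤ kB ω)
    (hkBbd : ∀ ω, kB ω ≤ hatk)
    (hkBint : IntervalIntegrable kB volume 0 L)
    (hint : (∫ y in (0:ℝ)..L, kB y) ≤ hatk * μc)
    (x : ℝ → ℝ) (hx : Measurable x) :
    Real.exp (-(hatk * μc) / c) * Real.sqrt (∫ ω in (0:ℝ)..L, (x ω) ^ 2) ≤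
      Real.sqrt (∫ ω in (0:ℝ)..L,
        (Real.exp (-(1 / c) * ∫ y in (ω - c * (L / c))..ω,
            periodize L (Set.indicator (Set.Icc 0 L) kB) y) *
          periodize L x (ω - c * (L / c))) ^ 2) := by
  have hcL : c * (L / c) = L := by field_simp
  set K : ℝ := ∫ y in (0:ℝ)..L, kB y with hK
  -- the inner integral is constant in ω
  have hinner : ∀ ω : ℝ,
      (∫ y in (ω - c * (L / c))..ω, periodize L (Set.indicator (Set.Icc 0 L) kB) y) = K := by
    intro ω
    rw [hcL]
    have hper := periodize_periodic L hL.ne' (Set.indicator (Set.Icc 0 L) kB)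
    have h1 := hper.intervalIntegral_add_eq (ω - L) 0
    simp only [sub_add_cancel, zero_add] at h1
    rw [h1, hK]
    apply intervalIntegral.integral_congr_ae
    filter_upwards with y hy
    rw [Set.uIoc_of_le hL.le] at hy
    rw [periodize_eq L hL _ hy, Set.indicator_of_mem (Set.Ioc_subset_Icc_self hy)]
  -- rewrite the RHS integral
  have hRHS : (∫ ω in (0:ℝ)..L,
        (Real.exp (-(1 / c) * ∫ y in (ω - c * (L / c))..ω,
            periodize L (Set.indicator (Set.Icc 0 L) kB) y) *
          periodize L x (ω - c * (L / c))) ^ 2)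
      = Real.exp (-(1 / c) * K) ^ 2 * ∫ ω in (0:ℝ)..L, (x ω) ^ 2 := by
    rw [← intervalIntegral.integral_const_mul]
    apply intervalIntegral.integral_congr_ae
    filter_upwards with ω hω
    rw [Set.uIoc_of_le hL.le] at hω
    rw [hinner ω, hcL]
    have hpx : periodize L x (ω - L) = x ω := by
      have := periodize_periodic L hL.ne' x (ω - L)
      rw [sub_add_cancel] at this
      rw [← this, periodize_eq L hL _ hω]
    rw [hpx, mul_pow]
  rw [hRHS, Real.sqrt_mul (sq_nonneg _), Real.sqrt_sq (Real.exp_nonneg _)]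
  apply mul_le_mul_of_nonneg_right _ (Real.sqrt_nonneg _)
  apply Real.exp_le_exp.mpr
  rw [neg_div, neg_mul, neg_le_neg_iff, one_div, inv_mul_eq_div, div_le_div_iff_of_pos_right hc]
  exact hint
end

section
/- Let $c\colon\mathbb{R}_{\ge 0}\to\mathbb{R}_{>0}$ be piecewise Lipschitz with $0<c_{\min}\le c(\omega)\le c_{\max}<\infty$ for all $\omega$. Then for every initial value $p_0$, the ODE $\dot p(t) = c(p(t))$, $p(0)=p_0$, has a unique absolutely continuous solution. -/
open MeasureTheory Set Filter Topology intervalIntegral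

/-- A function that is Lipschitz on a right-interval of every point is Borel measurable:
it is continuous off a countable set. -/
lemma aux_measurable {c : ℝ → ℝ}
    (hpl : ∀ p : ℝ, ∃ r : ℝ, p < r ∧ ∃ K : NNReal, LipschitzOnWith K c (Set.Ioc p r)) :
    Measurable c := by
  choose r hr K hK using hpl
  set U : Set ℝ := ⋃ x, Ioo x (r x) with hU
  have hUopen : IsOpen U := isOpen_iUnion fun x => isOpen_Ioo
  have hUc : ContinuousOn c U := by
    intro z hz
    rcases mem_iUnion.1 hz with ⟨x, hx⟩
    have h1 : ContinuousOn c (Ioc x (r x)) := (hK x).continuousOn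
    exact (h1.continuousAt
      (mem_nhds_iff.2 ⟨Ioo x (r x), Ioo_subset_Ioc_self, isOpen_Ioo, hx⟩)).continuousWithinAt
  have hDc : (Uᶜ).Countable := by
    apply Set.PairwiseDisjoint.countable_of_Ioo (y := r) ?_ (fun x _ => hr x)
    intro x hx y hy hxy
    have hsub : ∀ z ∈ Uᶜ, ∀ w ∈ Uᶜ, z < w → Disjoint (Ioo z (r z)) (Ioo w (r w)) := by
      intro z hz w hw hzw
      have hrz : r z ≤ w := by
        by_contra hcon
        exact hw (mem_iUnion.2 ⟨z, hzw, not_le.1 hcon⟩)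
      exact Set.disjoint_left.2 fun a ha hb => absurd (ha.2.trans_le hrz) (not_lt.2 hb.1.le)
    rcases lt_or_gt_of_ne hxy with h | h
    · exact hsub x hx y hy h
    · exact (hsub y hy x hx h).symm
  intro S hS
  have hsplit : c ⁻¹' S = (c ⁻¹' S ∩ U) ∪ (c ⁻¹' S ∩ Uᶜ) := by
    rw [← inter_union_distrib_left, union_compl_self, inter_univ]
  rw [hsplit]
  refine MeasurableSet.union ?_ ((hDc.mono inter_subset_right).measurableSet)
  have hmeasU : Measurable (U.restrict c) :=
    (continuousOn_iff_continuous_restrict.1 hUc).measurable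
  have himg : c ⁻¹' S ∩ U = Subtype.val '' (U.restrict c ⁻¹' S) := by
    ext z
    constructor
    · rintro ⟨hzS, hzU⟩; exact ⟨⟨z, hzU⟩, hzS, rfl⟩
    · rintro ⟨⟨w, hw⟩, hwS, rfl⟩; exact ⟨hwS, hw⟩
  rw [himg]
  exact (MeasurableEmbedding.subtype_coe hUopen.measurableSet).measurableSet_image.2
    (hmeasU hS)

/-- A function Lipschitz on a right-interval of every point has right limits everywhere. -/
lemma aux_rlim {c : ℝ → ℝ}
    (hpl : ∀ p : ℝ, ∃ r : ℝ, p < r ∧ ∃ K : NNReal, LipschitzOnWith K c (Set.Ioc p r))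
    (x : ℝ) : ∃ L, Filter.Tendsto c (nhdsWithin x (Set.Ioi x)) (nhds L) := by
  obtain ⟨r, hxr, K, hK⟩ := hpl x
  have hcauchy : Cauchy (Filter.map c (𝓝[>] x)) := by
    rw [Metric.cauchy_iff]
    refine ⟨Filter.NeBot.map inferInstance _, fun ε hε => ?_⟩
    set δ : ℝ := min (r - x) (ε / (K + 1)) with hδ
    have hδpos : 0 < δ := lt_min (by linarith) (div_pos hε (by positivity))
    refine ⟨c '' Ioc x (x + δ), Filter.image_mem_map
      (Ioc_mem_nhdsGT_of_mem ⟨le_rfl, by linarith⟩), ?_⟩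
    rintro _ ⟨u, hu, rfl⟩ _ ⟨v, hv, rfl⟩
    have hu' : u ∈ Ioc x r := ⟨hu.1, hu.2.trans (by have := min_le_left (r-x) (ε/((K:ℝ)+1)); simp only [hδ]; linarith)⟩
    have hv' : v ∈ Ioc x r := ⟨hv.1, hv.2.trans (by have := min_le_left (r-x) (ε/((K:ℝ)+1)); simp only [hδ]; linarith)⟩
    have hd : dist (c u) (c v) ≤ K * dist u v := hK.dist_le_mul u hu' v hv'
    have hduv : dist u v < δ := by
      rw [Real.dist_eq, abs_lt]
      constructor <;> [linarith [hu.1, hu.2, hv.1, hv.2]; linarith [hu.1, hu.2, hv.1, hv.2]]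
    have hKδ : (K : ℝ) * δ < ε := by
      have h1 : (K : ℝ) * δ ≤ K * (ε / (K + 1)) := by
        apply mul_le_mul_of_nonneg_left (min_le_right _ _) K.coe_nonneg
      have h2 : (K : ℝ) * (ε / (K + 1)) < ε := by
        rw [mul_div_assoc']
        rw [div_lt_iff₀ (by positivity)]
        nlinarith [K.coe_nonneg]
      linarith
    calc dist (c u) (c v) ≤ K * dist u v := hd
      _ ≤ K * δ := mul_le_mul_of_nonneg_left hduv.le K.coe_nonneg
      _ < ε := hKδ
  obtain ⟨L, hL⟩ := CompleteSpace.complete hcauchy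
  exact ⟨L, hL⟩

/-- Existence and uniqueness of an absolutely continuous solution of `ṗ = c(p)`,
`p(0) = p₀`, for a piecewise Lipschitz velocity `c` bounded between positive
constants. The solution is encoded by its integral equation on `[0,∞)`. -/
theorem stmt_9 (c : ℝ → ℝ) (cmin cmax : ℝ) (hcmin : 0 < cmin)
    (hbd : ∀ ω, cmin ≤ c ω ∧ c ω ≤ cmax)
    (hpl : ∀ p : ℝ, ∃ r : ℝ, p < r ∧ ∃ K : NNReal, LipschitzOnWith K c (Set.Ioc p r))
    (p0 : ℝ) :
    ∃ p : ℝ → ℝ,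
      (ContinuousOn p (Set.Ici 0) ∧ p 0 = p0 ∧
        ∀ t ∈ Set.Ici (0:ℝ), p t = p0 + ∫ s in (0:ℝ)..t, c (p s)) ∧
      ∀ q : ℝ → ℝ,
        (ContinuousOn q (Set.Ici 0) ∧ q 0 = p0 ∧
          ∀ t ∈ Set.Ici (0:ℝ), q t = p0 + ∫ s in (0:ℝ)..t, c (q s)) →
        ∀ t ∈ Set.Ici (0:ℝ), q t = p t := by
  have hcmeas : Measurable c := aux_measurable hpl
  have hcpos : ∀ x, 0 < c x := fun x => lt_of_lt_of_le hcmin (hbd x).1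
  have hcmax : 0 < cmax := (hcpos p0).trans_le (hbd p0).2
  -- right limits of c
  choose cp hcp using fun x => aux_rlim hpl x
  have hcp_min : ∀ x, cmin ≤ cp x := fun x =>
    ge_of_tendsto (hcp x) (Filter.Eventually.of_forall fun y => (hbd y).1)
  have hcp_ne : ∀ x, cp x ≠ 0 := fun x => (hcmin.trans_le (hcp_min x)).ne'
  -- the inverse velocity is interval integrable
  have hcinv_meas : Measurable fun u => (c u)⁻¹ := hcmeas.inv
  have hIntInv : ∀ a b : ℝ, IntervalIntegrable (fun u => (c u)⁻¹) volume a b := by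
    intro a b
    rw [intervalIntegrable_iff]
    apply Integrable.mono' (integrableOn_const (C := cmin⁻¹) measure_Ioc_lt_top.ne)
      hcinv_meas.aestronglyMeasurable.restrict
    refine ae_of_all _ fun u => ?_
    rw [Real.norm_eq_abs, abs_of_pos (inv_pos.2 (hcpos u))]
    exact inv_anti₀ hcmin (hbd u).1
  set T : ℝ → ℝ := fun x => ∫ u in p0..x, (c u)⁻¹ with hTdef
  have hTp0 : T p0 = 0 := integral_same
  have hTsub : ∀ a b : ℝ, T b - T a = ∫ u in a..b, (c u)⁻¹ := by
    intro a b
    have h := integral_add_adjacent_intervals (hIntInv p0 a) (hIntInv a b)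
    simp only [hTdef]
    linarith [h]
  have hTlb : ∀ a b : ℝ, a ≤ b → (b - a) * cmax⁻¹ ≤ T b - T a := by
    intro a b hab
    rw [hTsub]
    have h1 : (b - a) * cmax⁻¹ = ∫ _ in a..b, cmax⁻¹ := by
      rw [intervalIntegral.integral_const, smul_eq_mul]
    rw [h1]
    apply intervalIntegral.integral_mono_on hab intervalIntegrable_const (hIntInv a b)
    intro u _
    exact inv_anti₀ (hcpos u) (hbd u).2
  have hTmono : StrictMono T := by
    intro a b hab
    have := hTlb a b hab.le
    have h2 : 0 < (b - a) * cmax⁻¹ := by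
      have : 0 < cmax⁻¹ := inv_pos.2 hcmax
      nlinarith
    linarith
  have hTcont : Continuous T := intervalIntegral.continuous_primitive hIntInv p0
  have hTsurj : Function.Surjective T := by
    intro y
    rcases le_total 0 y with hy | hy
    · have h2 : y ≤ T (p0 + cmax * y) := by
        have h := hTlb p0 (p0 + cmax * y) (by nlinarith)
        rw [hTp0] at h
        have : (p0 + cmax * y - p0) * cmax⁻¹ = y := by field_simp; ring
        linarith
      obtain ⟨x, _, hx⟩ := intermediate_value_Icc (by nlinarith : p0 ≤ p0 + cmax * y)
        hTcont.continuousOn ⟨by rw [hTp0]; exact hy, h2⟩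
      exact ⟨x, hx⟩
    · have h2 : T (p0 + cmax * y) ≤ y := by
        have h := hTlb (p0 + cmax * y) p0 (by nlinarith)
        rw [hTp0] at h
        have : (p0 - (p0 + cmax * y)) * cmax⁻¹ = -y := by field_simp; ring
        linarith
      obtain ⟨x, _, hx⟩ := intermediate_value_Icc (by nlinarith : p0 + cmax * y ≤ p0)
        hTcont.continuousOn ⟨h2, by rw [hTp0]; exact hy⟩
      exact ⟨x, hx⟩
  set e : ℝ ≃o ℝ := StrictMono.orderIsoOfSurjective T hTmono hTsurj with hedef
  set p : ℝ → ℝ := fun t => e.symm t with hpdef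
  have hecoe : ∀ x, e x = T x := fun x => rfl
  have hpT : ∀ x, p (T x) = x := fun x => by
    have := e.symm_apply_apply x
    rwa [hecoe] at this
  have hTp : ∀ t, T (p t) = t := fun t => by
    have := e.apply_symm_apply t
    rwa [hecoe] at this
  have hp_cont : Continuous p := (e.symm : ℝ ≃o ℝ).continuous
  have hp_mono : StrictMono p := e.symm.strictMono
  have hp0 : p 0 = p0 := by rw [← hTp0, hpT]
  -- right derivative of T everywhere
  have hTd : ∀ x : ℝ, HasDerivWithinAt T (cp x)⁻¹ (Set.Ici x) x := by
    intro x
    apply intervalIntegral.integral_hasDerivWithinAt_of_tendsto_ae_right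
      (s := Set.Ici x) (t := Set.Ioi x) (hIntInv p0 x)
      ⟨Set.Ioi x, self_mem_nhdsWithin, hcinv_meas.aestronglyMeasurable.restrict⟩
    exact (((hcp x).inv₀ (hcp_ne x)).mono_left inf_le_left)
  -- integrability of c ∘ p
  have hint_cp : ∀ a b : ℝ, IntervalIntegrable (fun s => c (p s)) volume a b := by
    intro a b
    rw [intervalIntegrable_iff]
    apply Integrable.mono' (integrableOn_const (C := cmax) measure_Ioc_lt_top.ne)
      ((hcmeas.comp hp_cont.measurable).aestronglyMeasurable.restrict)
    refine ae_of_all _ fun s => ?_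
    simp only [Function.comp_apply, Real.norm_eq_abs]
    rw [abs_of_pos (hcpos _)]
    exact (hbd _).2
  set H : ℝ → ℝ := fun t => ∫ s in (0:ℝ)..t, c (p s) with hHdef
  have hHcont : Continuous H := intervalIntegral.continuous_primitive hint_cp 0
  have hHd : ∀ t : ℝ, HasDerivWithinAt H (cp (p t)) (Set.Ici t) t := by
    intro t
    apply intervalIntegral.integral_hasDerivWithinAt_of_tendsto_ae_right
      (s := Set.Ici t) (t := Set.Ioi t) (hint_cp 0 t)
      ⟨Set.Ioi t, self_mem_nhdsWithin,
        (hcmeas.comp hp_cont.measurable).aestronglyMeasurable.restrict⟩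
    refine Filter.Tendsto.mono_left ?_ inf_le_left
    have h1 : Filter.Tendsto p (𝓝[>] t) (𝓝[>] (p t)) := by
      rw [tendsto_nhdsWithin_iff]
      exact ⟨(hp_cont.tendsto t).mono_left nhdsWithin_le_nhds,
        eventually_mem_nhdsWithin.mono fun s hs => hp_mono hs⟩
    exact (hcp (p t)).comp h1
  have hFd : ∀ x : ℝ, HasDerivWithinAt (fun y => H (T y)) 1 (Set.Ici x) x := by
    intro x
    have h1 : HasDerivWithinAt H (cp x) (Set.Ici (T x)) (T x) := by
      have := hHd (T x)
      rwa [hpT x] at this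
    have h2 := HasDerivWithinAt.comp (h := T) (h₂ := H) (x := x) h1 (hTd x)
      (fun y hy => hTmono.monotone hy)
    have h3 : cp x * (cp x)⁻¹ = 1 := mul_inv_cancel₀ (hcp_ne x)
    rw [h3] at h2
    exact h2
  have hFeq : ∀ x : ℝ, H (T x) = x - p0 := by
    intro x
    have h := intervalIntegral.integral_eq_sub_of_hasDeriv_right (a := p0) (b := x)
      (f := fun y => H (T y)) (f' := fun _ => (1:ℝ))
      ((hHcont.comp hTcont).continuousOn)
      (fun y _ => (hFd y).mono Set.Ioi_subset_Ici_self)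
      intervalIntegrable_const
    rw [intervalIntegral.integral_const, smul_eq_mul, mul_one] at h
    have h' : x - p0 = H (T x) - H (T p0) := h
    rw [hTp0] at h'
    have hH0 : H 0 = 0 := integral_same
    rw [hH0] at h'
    linarith
  have hpsol : ∀ t : ℝ, p t = p0 + H t := by
    intro t
    have := hFeq (p t)
    rw [hTp t] at this
    linarith
  refine ⟨p, ⟨hp_cont.continuousOn, hp0, fun t _ => hpsol t⟩, ?_⟩
  rintro q ⟨hqc, hq0, hqeq⟩
  -- integrability of c ∘ q on subintervals of [0, ∞)
  have hqm : ∀ a b : ℝ, 0 ≤ a → a ≤ b → IntervalIntegrable (fun s => c (q s)) volume a b := by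
    intro a b ha hab
    rw [intervalIntegrable_iff_integrableOn_Ioc_of_le hab]
    have hqa : AEMeasurable q (volume.restrict (Set.Ioc a b)) :=
      (hqc.mono fun s hs => ha.trans hs.1.le).aemeasurable measurableSet_Ioc
    apply Integrable.mono' (integrableOn_const (C := cmax) measure_Ioc_lt_top.ne)
      (hcmeas.comp_aemeasurable hqa).aestronglyMeasurable
    refine ae_of_all _ fun s => ?_
    simp only [Function.comp_apply, Real.norm_eq_abs]
    rw [abs_of_pos (hcpos _)]
    exact (hbd _).2
  have hq_inc : ∀ t1 t2 : ℝ, 0 ≤ t1 → t1 ≤ t2 → q t2 - q t1 = ∫ s in t1..t2, c (q s) := by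
    intro t1 t2 h1 h12
    have e1 := hqeq t1 h1
    have e2 := hqeq t2 (h1.trans h12)
    have h := integral_add_adjacent_intervals (hqm 0 t1 le_rfl h1) (hqm t1 t2 h1 h12)
    rw [e1, e2]
    linarith
  have hq_lt : ∀ t1 t2 : ℝ, 0 ≤ t1 → t1 < t2 → q t1 < q t2 := by
    intro t1 t2 h1 h12
    have hge : cmin * (t2 - t1) ≤ q t2 - q t1 := by
      rw [hq_inc t1 t2 h1 h12.le]
      have hc1 : cmin * (t2 - t1) = ∫ _ in t1..t2, cmin := by
        rw [intervalIntegral.integral_const, smul_eq_mul]; ring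
      rw [hc1]
      exact intervalIntegral.integral_mono_on h12.le intervalIntegrable_const
        (hqm t1 t2 h1 h12.le) fun s _ => (hbd _).1
    nlinarith
  have key : ∀ b : ℝ, 0 ≤ b → T (q b) = b := by
    intro b hb
    rcases eq_or_lt_of_le hb with rfl | hb'
    · rw [hq0, hTp0]
    have hderiv : ∀ t ∈ Set.Ioo (0:ℝ) b, HasDerivWithinAt (fun s => T (q s)) 1 (Set.Ioi t) t := by
      intro t ht
      have ht0 : (0:ℝ) < t := ht.1
      -- q has right derivative cp (q t) at t
      have hqd : HasDerivWithinAt q (cp (q t)) (Set.Ici t) t := by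
        have hprim : HasDerivWithinAt (fun u => p0 + ∫ s in (0:ℝ)..u, c (q s))
            (cp (q t)) (Set.Ici t) t := by
          apply HasDerivWithinAt.const_add
          apply intervalIntegral.integral_hasDerivWithinAt_of_tendsto_ae_right
            (s := Set.Ici t) (t := Set.Ioi t) (hqm 0 t le_rfl ht0.le)
          · have hii := hqm t (t + 1) ht0.le (by linarith)
            rw [intervalIntegrable_iff_integrableOn_Ioc_of_le (by linarith)] at hii
            exact ⟨Set.Ioc t (t + 1), Ioc_mem_nhdsGT_of_mem ⟨le_rfl, by linarith⟩,
              hii.aestronglyMeasurable⟩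
          · refine Filter.Tendsto.mono_left ?_ inf_le_left
            have h1 : Filter.Tendsto q (𝓝[>] t) (𝓝[>] (q t)) := by
              rw [tendsto_nhdsWithin_iff]
              constructor
              · exact ((hqc.continuousAt (Ici_mem_nhds ht0)).tendsto).mono_left
                  nhdsWithin_le_nhds
              · exact eventually_mem_nhdsWithin.mono fun s hs => hq_lt t s ht0.le hs
            exact (hcp (q t)).comp h1
        exact hprim.congr (fun s hs => hqeq s (ht0.le.trans hs)) (hqeq t ht0.le)
      have h1 : HasDerivWithinAt T (cp (q t))⁻¹ (Set.Ici (q t)) (q t) := hTd (q t)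
      have h2 := HasDerivWithinAt.comp (h := q) (h₂ := T) (x := t) h1
        (hqd.mono Set.Ioi_subset_Ici_self)
        (fun s hs => (hq_lt t s ht0.le hs).le)
      have h3 : (cp (q t))⁻¹ * cp (q t) = 1 := inv_mul_cancel₀ (hcp_ne _)
      rw [h3] at h2
      exact h2
    have hcontTq : ContinuousOn (fun s => T (q s)) (Set.Icc 0 b) :=
      hTcont.comp_continuousOn (hqc.mono Set.Icc_subset_Ici_self)
    have h := intervalIntegral.integral_eq_sub_of_hasDeriv_right_of_le (a := 0) (b := b)
      (f := fun s => T (q s)) (f' := fun _ => (1:ℝ)) hb hcontTq hderiv intervalIntegrable_const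
    rw [intervalIntegral.integral_const, smul_eq_mul, mul_one] at h
    have h' : b - 0 = T (q b) - T (q 0) := h
    rw [hq0, hTp0] at h'
    linarith
  intro t ht
  have hk := key t ht
  have : T (q t) = T (p t) := by rw [hk, hTp]
  exact hTmono.injective this
end
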